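/- Let M be a prime and Q a positive integer with gcd(M, Q) = 1, let p be a prime with p | Q, and let ψ be a Dirichlet character modulo p. Let m be any integer and let n be an integer with gcd(n, M) = 1. Then S_ψ(M·m, n; Q·M) = − S_ψ(m, n·M̄; Q), where M̄ denotes an integer inverse of M modulo Q. -/

import Mathlib

open Complex

/-- `eAdd q x = exp(2πi x / q)`. -/
noncomputable def eAdd (q : ℕ) (x : ℤ) : ℂ :=
  Complex.exp (2 * Real.pi * Complex.I * x / q)

/-- The Kloosterman sum `S(m, n; q) = ∑_{x mod q, (x,q)=1} e_q(m x + n x*)`. -/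
noncomputable def klo (m n : ℤ) (q : ℕ) [NeZero q] : ℂ :=
  ∑ x : (ZMod q)ˣ,
    eAdd q (m * ((x : ZMod q).val : ℤ) + n * (((x⁻¹ : (ZMod q)ˣ) : ZMod q).val : ℤ))

/-- The twisted Kloosterman sum `S_ψ(m, n; q)` for a Dirichlet character `ψ` mod `d`, `d ∣ q`. -/
noncomputable def kloTwist {d : ℕ} (ψ : DirichletCharacter ℂ d) (m n : ℤ) (q : ℕ)
    [NeZero q] (h : d ∣ q) : ℂ :=
  ∑ x : (ZMod q)ˣ,
    ψ (ZMod.castHom h (ZMod d) (x : ZMod q)) *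
      eAdd q (m * ((x : ZMod q).val : ℤ) + n * (((x⁻¹ : (ZMod q)ˣ) : ZMod q).val : ℤ))


/-!
A Bezout relation `u M + v Q = 1` splits `e_{QM}(k) = e_Q(u k) e_M(v k)`, so by the Chinese
remainder theorem for units the twisted Kloosterman sum modulo `QM` factors as
`S_ψ(m u, n u; Q) · S(m v, n v; M)`. For the first argument `M m` we have `M m u ≡ m` and
`u ≡ M̄ (mod Q)`, while the second factor becomes the Ramanujan sum `∑_{b mod M}^* e_M(n v b)`,
which is `-1` because `M` is prime and `n v` is prime to `M`.
-/

open ZMod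

lemma eAdd_eq_stdAddChar (q : ℕ) [NeZero q] (x : ℤ) : eAdd q x = stdAddChar (x : ZMod q) := by
  rw [eAdd, stdAddChar_coe]

lemma kloTwist_eq_sum_stdAddChar {d : ℕ} (ψ : DirichletCharacter ℂ d) (m n : ℤ) (q : ℕ)
    [NeZero q] (h : d ∣ q) :
    kloTwist ψ m n q h = ∑ x : (ZMod q)ˣ, ψ (castHom h (ZMod d) x) *
      stdAddChar ((m : ZMod q) * (x : ZMod q) + (n : ZMod q) * ((x⁻¹ : (ZMod q)ˣ) : ZMod q)) := by
  simp only [kloTwist, eAdd_eq_stdAddChar]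
  push_cast [natCast_val, cast_id', id]
  rfl

lemma klo_eq_sum_stdAddChar (m n : ℤ) (q : ℕ) [NeZero q] :
    klo m n q = ∑ x : (ZMod q)ˣ,
      stdAddChar ((m : ZMod q) * (x : ZMod q) + (n : ZMod q) * ((x⁻¹ : (ZMod q)ˣ) : ZMod q)) := by
  simp only [klo, eAdd_eq_stdAddChar]
  push_cast [natCast_val, cast_id', id]
  rfl

lemma stdAddChar_eq_mul_of_bezout {Q M : ℕ} [NeZero Q] [NeZero M] {u v : ℤ}
    (huv : u * M + v * Q = 1) (z : ZMod (Q * M)) :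
    stdAddChar z = stdAddChar ((u : ZMod Q) * castHom (dvd_mul_right Q M) (ZMod Q) z) *
      stdAddChar ((v : ZMod M) * castHom (dvd_mul_left M Q) (ZMod M) z) := by
  obtain ⟨k, rfl⟩ := intCast_surjective z
  simp only [map_intCast, ← Int.cast_mul, stdAddChar_coe, ← Complex.exp_add]
  congr 1
  have hQ : (Q : ℂ) ≠ 0 := NeZero.ne _
  have hM : (M : ℂ) ≠ 0 := NeZero.ne _
  have huv' : (u : ℂ) * M + v * Q = 1 := by exact_mod_cast huv
  rw [div_add_div _ _ hQ hM, div_eq_div_iff (by simp [hQ, hM]) (by simp [hQ, hM])]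
  push_cast
  linear_combination (-2 * Real.pi * Complex.I * k * Q * M) * huv'

theorem AddChar.sum_units_eq_neg_one {F R : Type*} [Field F] [Fintype F] [DecidableEq F]
    [CommRing R] [IsDomain R] {ψ : AddChar F R} (hψ : ψ ≠ 1) : ∑ b : Fˣ, ψ b = -1 := by
  have h := Finset.add_sum_erase Finset.univ ψ (Finset.mem_univ 0)
  rw [AddChar.sum_eq_zero_of_ne_one hψ, AddChar.map_zero_eq_one] at h
  rw [Fintype.sum_equiv unitsEquivNeZero (fun b : Fˣ => ψ b) (fun a => ψ a) (fun _ => rfl),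
    ← Finset.sum_subtype (Finset.univ.erase 0) (by simp)]
  linear_combination h

lemma sum_units_mul_eq_mul_sum {Q M : ℕ} [NeZero Q] [NeZero M] (h : Q.Coprime M)
    {R : Type*} [CommSemiring R] (f : (ZMod Q)ˣ → R) (g : (ZMod M)ˣ → R) :
    ∑ x : (ZMod (Q * M))ˣ,
      f (Units.map (castHom (dvd_mul_right Q M) (ZMod Q)).toMonoidHom x) *
        g (Units.map (castHom (dvd_mul_left M Q) (ZMod M)).toMonoidHom x) =
      (∑ a, f a) * ∑ b, g b := by
  rw [Finset.sum_mul_sum, ← Fintype.sum_prod_type']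
  refine Fintype.sum_equiv
    ((Units.mapEquiv (chineseRemainder h).toMulEquiv).trans MulEquiv.prodUnits) _ _ fun x => ?_
  congr 2 <;> apply Units.ext
  exacts [(Prod.fst_zmod_cast _).symm, (Prod.snd_zmod_cast _).symm]

lemma kloTwist_congr {d : ℕ} (ψ : DirichletCharacter ℂ d) {m m' n n' : ℤ} {q : ℕ} [NeZero q]
    (h : d ∣ q) (hm : (m : ZMod q) = m') (hn : (n : ZMod q) = n') :
    kloTwist ψ m n q h = kloTwist ψ m' n' q h := by
  simp only [kloTwist_eq_sum_stdAddChar, hm, hn]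

theorem kloTwist_mul_eq_mul_klo {d Q M : ℕ} [NeZero Q] [NeZero M] (ψ : DirichletCharacter ℂ d)
    (hd : d ∣ Q) {u v : ℤ} (huv : u * M + v * Q = 1) (m n : ℤ) :
    kloTwist ψ m n (Q * M) (hd.mul_right M) =
      kloTwist ψ (m * u) (n * u) Q hd * klo (m * v) (n * v) M := by
  have hcop : Q.Coprime M := Nat.isCoprime_iff_coprime.mp (IsCoprime.symm ⟨u, v, huv⟩)
  rw [kloTwist_eq_sum_stdAddChar, kloTwist_eq_sum_stdAddChar, klo_eq_sum_stdAddChar,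
    ← sum_units_mul_eq_mul_sum hcop]
  refine Finset.sum_congr rfl fun x _ => ?_
  rw [stdAddChar_eq_mul_of_bezout huv, ← castHom_comp hd (dvd_mul_right Q M)]
  simp only [RingHom.comp_apply, Units.coe_map, RingHom.toMonoidHom_eq_coe, MonoidHom.coe_coe,
    map_add, map_mul, map_intCast, Units.coe_map_inv, Int.cast_mul]
  rw [← mul_assoc]
  congr 3 <;> ring

theorem klo_eq_neg_one_of_prime {M : ℕ} [Fact M.Prime] {m n : ℤ} (hm : (m : ZMod M) = 0)
    (hn : (n : ZMod M) ≠ 0) : klo m n M = -1 := by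
  rw [klo_eq_sum_stdAddChar, ← AddChar.sum_units_eq_neg_one (isPrimitive_stdAddChar M hn)]
  refine Fintype.sum_equiv (Equiv.inv _) _ _ fun x => ?_
  rw [hm, zero_mul, zero_add, AddChar.mulShift_apply]
  rfl

theorem stmt_9_general (M : ℕ) [Fact M.Prime] (Q : ℕ) [NeZero Q] (hMQ : Nat.gcd M Q = 1)
    (p : ℕ) (hpQ : p ∣ Q) (ψ : DirichletCharacter ℂ p)
    (m n : ℤ) (hn : Int.gcd n M = 1)
    (Mbar : ℤ) (hMbar : (((M : ℤ) * Mbar : ℤ) : ZMod Q) = 1) :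
    kloTwist ψ ((M : ℤ) * m) n (Q * M) (hpQ.mul_right M) =
      - kloTwist ψ m (n * Mbar) Q hpQ := by
  obtain ⟨u, v, huv⟩ : IsCoprime (M : ℤ) Q := Nat.isCoprime_iff_coprime.mpr hMQ
  have huM : (u : ZMod Q) * M = 1 := by simpa using congrArg (Int.cast : ℤ → ZMod Q) huv
  have hvQ : (v : ZMod M) * Q = 1 := by simpa using congrArg (Int.cast : ℤ → ZMod M) huv
  have hnM : IsUnit (n : ZMod M) := by
    simpa using (Int.isCoprime_iff_gcd_eq_one.mpr hn).map (Int.castRingHom (ZMod M))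
  rw [kloTwist_mul_eq_mul_klo ψ hpQ huv, klo_eq_neg_one_of_prime (by simp) ?nonzero, mul_neg_one]
  case nonzero =>
    push_cast
    exact mul_ne_zero hnM.ne_zero (left_ne_zero_of_mul_eq_one hvQ)
  congr 1
  refine kloTwist_congr ψ hpQ ?_ ?_
  · push_cast
    linear_combination m * huM
  · push_cast at hMbar ⊢
    linear_combination (n * Mbar) * huM - n * u * hMbar

/-- `S_ψ(Mm, n; QM) = −S_ψ(m, nM̄; Q)` for `M` prime, `(M,Q) = 1`, `(n,M) = 1`. -/
theorem stmt_9 (M : ℕ) [Fact M.Prime] (Q : ℕ) [NeZero Q] (hMQ : Nat.gcd M Q = 1)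
    (p : ℕ) (hp : p.Prime) (hpQ : p ∣ Q) (ψ : DirichletCharacter ℂ p)
    (m n : ℤ) (hn : Int.gcd n M = 1)
    (Mbar : ℤ) (hMbar : (((M : ℤ) * Mbar : ℤ) : ZMod Q) = 1) :
    kloTwist ψ ((M : ℤ) * m) n (Q * M) (hpQ.mul_right M) =
      - kloTwist ψ m (n * Mbar) Q hpQ :=
  stmt_9_general M Q hMQ p hpQ ψ m n hn Mbar hMbar
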